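/- Let α > 0 and define on a tubular neighborhood S_α of a surface M the field (F_η b)(x) := exp(−∫_{η(q(x))}^{s(x)} (div(ν ∘ q))(q(x) + τ ν(q(x))) dτ) · (b ν)(q(x)), where x = q(x) + s(x) ν(q(x)) are tubular coordinates and b : M → ℝ. Then F_η b is divergence free: div(F_η b) = 0 in S_α (whenever b, η, and the geometry are regular enough for the classical computation, e.g. b ∈ C¹, η ∈ C¹, M a C² surface). -/

import Mathlib

/-!
Write `F = H • N` with `H = ⟪F, N⟫`, which is possible since `F` is parallel to the unit field
`N`. Then `div F = H · div N + ∂_N H`. Along the normal line through `x` the tubular coordinates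
give `q` and `N` constant and `s` moving at unit speed, so `H` restricted to that line is
`b(q x) · exp(−∫_{η(q x)}^{s} D)` and, by the fundamental theorem of calculus, `∂_N H = −D · H`.
The two terms cancel.
-/

open scoped RealInnerProductSpace Topology

section Divergence

variable {ι : Type*} [Fintype ι] [DecidableEq ι]

noncomputable def divergence (f : EuclideanSpace ℝ ι → EuclideanSpace ℝ ι)
    (x : EuclideanSpace ℝ ι) : ℝ :=
  ∑ i, fderiv ℝ f x (EuclideanSpace.single i 1) i

theorem ContinuousLinearMap.sum_apply_single_mul (l : EuclideanSpace ℝ ι →L[ℝ] ℝ)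
    (v : EuclideanSpace ℝ ι) : ∑ i, l (EuclideanSpace.single i 1) * v i = l v := by
  conv_rhs => rw [← (EuclideanSpace.basisFun ι ℝ).sum_repr v]
  simp [map_sum, mul_comm]

theorem Filter.EventuallyEq.divergence_eq {f g : EuclideanSpace ℝ ι → EuclideanSpace ℝ ι}
    {x : EuclideanSpace ℝ ι} (h : f =ᶠ[𝓝 x] g) : divergence f x = divergence g x := by
  simp only [divergence, h.fderiv_eq]

theorem divergence_smul {H : EuclideanSpace ℝ ι → ℝ} {N : EuclideanSpace ℝ ι → EuclideanSpace ℝ ι}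
    {x : EuclideanSpace ℝ ι} (hH : DifferentiableAt ℝ H x) (hN : DifferentiableAt ℝ N x) :
    divergence (fun y => H y • N y) x = H x * divergence N x + fderiv ℝ H x (N x) := by
  simp only [divergence, fderiv_fun_smul hH hN, add_apply, smul_apply,
    ContinuousLinearMap.smulRight_apply, PiLp.add_apply, PiLp.smul_apply, smul_eq_mul,
    Finset.sum_add_distrib, ← Finset.mul_sum, ContinuousLinearMap.sum_apply_single_mul]

end Divergence

theorem hasDerivAt_exp_neg_integral {g : ℝ → ℝ} {U : Set ℝ} {a u : ℝ} (hU : IsOpen U)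
    (hg : ContinuousOn g U) (hau : Set.uIcc a u ⊆ U) :
    HasDerivAt (fun t => Real.exp (-∫ τ in a..t, g τ)) (-g u * Real.exp (-∫ τ in a..u, g τ)) u := by
  have hu : u ∈ U := hau Set.right_mem_uIcc
  have hI : HasDerivAt (fun t => ∫ τ in a..t, g τ) (g u) u :=
    intervalIntegral.integral_hasDerivAt_right (hg.mono hau).intervalIntegrable
      (hg.stronglyMeasurableAtFilter hU u hu) (hg.continuousAt (hU.mem_nhds hu))
  simpa [mul_comm] using hI.neg.exp

theorem hasLineDerivAt_of_eventuallyEq_comp_const_add {𝕜 E F : Type*} [NontriviallyNormedField 𝕜]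
    [AddCommGroup E] [Module 𝕜 E] [NormedAddCommGroup F] [NormedSpace 𝕜 F] {f : E → F}
    {φ : 𝕜 → F} {φ' : F} {c : 𝕜} {x v : E} (hφ : HasDerivAt φ φ' c)
    (hf : ∀ᶠ t in 𝓝 (0 : 𝕜), f (x + t • v) = φ (c + t)) :
    HasLineDerivAt 𝕜 f φ' x v :=
  (HasDerivAt.comp_const_add c 0 (by simpa using hφ)).congr_of_eventuallyEq hf

section TubularWeight

variable {E : Type*} [NormedAddCommGroup E] [NormedSpace ℝ E]

noncomputable def tubularWeight (q N : E → E) (s η D : E → ℝ) (x : E) : ℝ :=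
  Real.exp (-∫ τ in (η (q x))..(s x), D (q x + τ • N x))

theorem hasLineDerivAt_mul_tubularWeight {S : Set E} (hS : IsOpen S) {q N : E → E}
    {s η D : E → ℝ} (b : E → ℝ) (hDc : ContinuousOn D S) {x : E} (hx : x ∈ S)
    (hrep : q x + s x • N x = x)
    (hline : ∀ τ : ℝ, q x + τ • N x ∈ S →
      q (q x + τ • N x) = q x ∧ s (q x + τ • N x) = τ ∧ N (q x + τ • N x) = N x)
    (hseg : ∀ τ ∈ Set.uIcc (η (q x)) (s x), q x + τ • N x ∈ S) :
    HasLineDerivAt ℝ (fun y => b (q y) * tubularWeight q N s η D y)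
      (-D x * (b (q x) * tubularWeight q N s η D x)) x (N x) := by
  have hE : HasDerivAt (fun t => Real.exp (-∫ τ in (η (q x))..t, D (q x + τ • N x)))
      (-D x * tubularWeight q N s η D x) (s x) := by
    have := hasDerivAt_exp_neg_integral (hS.preimage (by fun_prop : Continuous
      fun τ : ℝ => q x + τ • N x)) (hDc.comp (by fun_prop) fun _ h => h) hseg
    simpa only [Function.comp_apply, hrep, tubularWeight] using this
  -- On the normal line through `x`, only the upper limit `s` of the integral moves.
  have h_line : ∀ᶠ t in 𝓝 (0 : ℝ), b (q (x + t • N x)) * tubularWeight q N s η D (x + t • N x) =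
      b (q x) * Real.exp (-∫ τ in (η (q x))..(s x + t), D (q x + τ • N x)) := by
    have hcont : Continuous fun t : ℝ => x + t • N x := by fun_prop
    filter_upwards [hcont.continuousAt.preimage_mem_nhds (by simpa using hS.mem_nhds hx)] with t
      (ht : x + t • N x ∈ S)
    have hpt : q x + (s x + t) • N x = x + t • N x := by rw [add_smul, ← add_assoc, hrep]
    obtain ⟨hq', hs', hN'⟩ := hline (s x + t) (hpt ▸ ht)
    rw [hpt] at hq' hs' hN'
    simp only [tubularWeight, hq', hs', hN']
  exact hasLineDerivAt_of_eventuallyEq_comp_const_add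
    ((hE.const_mul (b (q x))).congr_deriv (by ring)) h_line

end TubularWeight

theorem extension_field_divergence_free_general
    (Sα : Set (EuclideanSpace ℝ (Fin 3))) (hS : IsOpen Sα)
    (q N : EuclideanSpace ℝ (Fin 3) → EuclideanSpace ℝ (Fin 3))
    (s η b : EuclideanSpace ℝ (Fin 3) → ℝ)
    (hN : DifferentiableOn ℝ N Sα)
    (hunit : ∀ x ∈ Sα, ‖N x‖ = 1)
    (hrep : ∀ x ∈ Sα, q x + s x • N x = x)
    (hline : ∀ x ∈ Sα, ∀ τ : ℝ, q x + τ • N x ∈ Sα →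
      q (q x + τ • N x) = q x ∧ s (q x + τ • N x) = τ ∧ N (q x + τ • N x) = N x)
    (hseg : ∀ x ∈ Sα, ∀ τ ∈ Set.uIcc (η (q x)) (s x), q x + τ • N x ∈ Sα)
    (D : EuclideanSpace ℝ (Fin 3) → ℝ)
    (hD : ∀ x ∈ Sα,
      D x = ∑ i : Fin 3, fderiv ℝ N x (EuclideanSpace.single i 1) i)
    (hDc : ContinuousOn D Sα)
    (F : EuclideanSpace ℝ (Fin 3) → EuclideanSpace ℝ (Fin 3))
    (hF : ∀ x ∈ Sα, F x =
      Real.exp (-∫ τ in (η (q x))..(s x), D (q x + τ • N x)) •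
        (b (q x) • N x)) :
    ∀ x ∈ Sα, (∑ i : Fin 3, fderiv ℝ F x (EuclideanSpace.single i 1) i) = 0 := by
  intro x hx
  change divergence F x = 0
  by_cases hFx : DifferentiableAt ℝ F x
  swap
  -- junk value: `fderiv` is `0` where `F` is not differentiable
  · simp [divergence, fderiv_zero_of_not_differentiableAt hFx]
  have hxS : Sα ∈ 𝓝 x := hS.mem_nhds hx
  have hNx : DifferentiableAt ℝ N x := (hN x hx).differentiableAt hxS
  set H : EuclideanSpace ℝ (Fin 3) → ℝ := fun y => ⟪F y, N y⟫
  have hH : ∀ y ∈ Sα, H y = b (q y) * tubularWeight q N s η D y := fun y hy => by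
    simp only [H, hF y hy, tubularWeight, smul_smul, real_inner_smul_left,
      real_inner_self_eq_norm_sq, hunit y hy]
    ring
  have hFH : F =ᶠ[𝓝 x] fun y => H y • N y := Filter.eventuallyEq_of_mem hxS fun y hy => by
    rw [hF y hy, hH y hy, smul_smul, mul_comm, tubularWeight]
  have hHx : DifferentiableAt ℝ H x := hFx.inner ℝ hNx
  have h_dN : fderiv ℝ H x (N x) = -D x * H x := by
    rw [hH x hx]
    exact (hHx.hasFDerivAt.hasLineDerivAt (N x)).unique
      ((hasLineDerivAt_mul_tubularWeight hS b hDc hx (hrep x hx) (hline x hx) (hseg x hx))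
        |>.congr_of_eventuallyEq (Filter.eventuallyEq_of_mem hxS hH))
  rw [hFH.divergence_eq, divergence_smul hHx hNx, h_dN, divergence, ← hD x hx]
  ring

/-- The transported boundary field
`F_η b (x) = exp(−∫_{η(q x)}^{s x} div(ν∘q)(q x + τ ν(q x)) dτ) · (b ν)(q x)`
is divergence free on the tubular neighbourhood `S_α`: here `q`, `s` are the
tubular coordinates (`x = q x + s x • N x` with `N = ν ∘ q` the unit normal
transported along normal lines) and `D = div N`. -/
theorem extension_field_divergence_free
    (Sα : Set (EuclideanSpace ℝ (Fin 3))) (hS : IsOpen Sα)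
    (q N : EuclideanSpace ℝ (Fin 3) → EuclideanSpace ℝ (Fin 3))
    (s η b : EuclideanSpace ℝ (Fin 3) → ℝ)
    (hq : DifferentiableOn ℝ q Sα) (hs : DifferentiableOn ℝ s Sα)
    (hN : DifferentiableOn ℝ N Sα)
    (hb : Differentiable ℝ b) (hη : Differentiable ℝ η)
    (hunit : ∀ x ∈ Sα, ‖N x‖ = 1)
    (hrep : ∀ x ∈ Sα, q x + s x • N x = x)
    (hline : ∀ x ∈ Sα, ∀ τ : ℝ, q x + τ • N x ∈ Sα →
      q (q x + τ • N x) = q x ∧ s (q x + τ • N x) = τ ∧ N (q x + τ • N x) = N x)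
    (hseg : ∀ x ∈ Sα, ∀ τ ∈ Set.uIcc (η (q x)) (s x), q x + τ • N x ∈ Sα)
    (D : EuclideanSpace ℝ (Fin 3) → ℝ)
    (hD : ∀ x ∈ Sα,
      D x = ∑ i : Fin 3, fderiv ℝ N x (EuclideanSpace.single i 1) i)
    (hDc : ContinuousOn D Sα)
    (F : EuclideanSpace ℝ (Fin 3) → EuclideanSpace ℝ (Fin 3))
    (hF : ∀ x ∈ Sα, F x =
      Real.exp (-∫ τ in (η (q x))..(s x), D (q x + τ • N x)) •
        (b (q x) • N x)) :
    ∀ x ∈ Sα, (∑ i : Fin 3, fderiv ℝ F x (EuclideanSpace.single i 1) i) = 0 :=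
  extension_field_divergence_free_general Sα hS q N s η b hN hunit hrep hline hseg D hD hDc F hF
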